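/- Consider the Moore generalized shift φ with D_F = D_G = {−1,0,1} associated to a Turing machine T with extended transition function. For every sequence s ∈ A^ℤ of the form s = ψ(q, t) with q ≠ q_halt, φ(s) = ψ(Δ(q,t)); in particular, if T with input (q₀, t) reaches the halting state after exactly n steps, then φⁿ(ψ(q₀,t)) is a sequence with symbol q_halt at position 0, and φ^m(ψ(q₀,t)) has a non-halting state symbol at position 0 for all m < n. -/

import Mathlib

/-!
Under `ψ` the window at positions `−1, 0, 1` of `ψ(q, t)` is `(t₋₁, q, t₀)`, exactly what Moore's
`G` needs to perform the machine step locally; `F` then re-centres the head. Hence `ψ`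
semiconjugates `Δ` to `φ` whenever the head moves by at most one cell, and the orbit statement
follows by iterating, since position `0` of `ψ(q, t)` carries the state `q`.
-/

section TMdefs
variable {Q Λ : Type*}

/-- One step of a Turing machine with transition function components
`F₁ : Q × Σ → Q`, `F₂ : Q × Σ → Σ`, `F₃ : Q × Σ → {−1,0,1} ⊆ ℤ`:
replace the state by `F₁(q,t₀)`, the scanned symbol `t₀` by `F₂(q,t₀)` and
shift the tape by `F₃(q,t₀)` (`1` = left shift, `−1` = right shift).
This is the global transition function `Δ` on `Q × Σ^ℤ`. -/
def tmStep (F1 : Q → Λ → Q) (F2 : Q → Λ → Λ) (F3 : Q → Λ → ℤ) :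
    Q × (ℤ → Λ) → Q × (ℤ → Λ) := fun c =>
  (F1 c.1 (c.2 0),
    fun n => Function.update c.2 0 (F2 c.1 (c.2 0)) (n + F3 c.1 (c.2 0)))

/-- The encoding `ψ : Q × Σ^ℤ → A^ℤ`, `A = Σ ⊔ Q`: the state symbol is placed
at position `0`, the tape symbol `t_i` at position `i+1` for `i ≥ 0` and at
position `i` for `i < 0`. -/
def encode (q : Q) (t : ℤ → Λ) : ℤ → Q ⊕ Λ := fun n =>
  if n = 0 then Sum.inl q else if 0 < n then Sum.inr (t (n - 1)) else Sum.inr (t n)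

/-- Moore's map `F` of the generalized shift, depending on the symbols at
positions `−1, 0, 1`. -/
def mooreF (F3 : Q → Λ → ℤ) : (Q ⊕ Λ) × (Q ⊕ Λ) × (Q ⊕ Λ) → ℤ
  | (Sum.inr _, Sum.inl q, Sum.inr a) => F3 q a
  | _ => 0

/-- Moore's map `G` of the generalized shift, modifying the symbols at
positions `−1, 0, 1`. -/
def mooreG (F1 : Q → Λ → Q) (F2 : Q → Λ → Λ) (F3 : Q → Λ → ℤ) :
    (Q ⊕ Λ) × (Q ⊕ Λ) × (Q ⊕ Λ) → (Q ⊕ Λ) × (Q ⊕ Λ) × (Q ⊕ Λ)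
  | (Sum.inr b, Sum.inl q, Sum.inr a) =>
      if F3 q a = 1 then (Sum.inr b, Sum.inr (F2 q a), Sum.inl (F1 q a))
      else if F3 q a = -1 then (Sum.inl (F1 q a), Sum.inr b, Sum.inr (F2 q a))
      else (Sum.inr b, Sum.inl (F1 q a), Sum.inr (F2 q a))
  | x => x

/-- The generalized shift with `D_F = D_G = {−1,0,1}` determined by maps
`F : A³ → ℤ` and `G : A³ → A³`: first modify the symbols at positions
`−1, 0, 1` by `G`, then shift the whole sequence by `F`. -/
def gshift {A : Type*} (F : A × A × A → ℤ) (G : A × A × A → A × A × A)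
    (s : ℤ → A) : ℤ → A :=
  let a := (s (-1), s 0, s 1)
  let s' : ℤ → A := fun n =>
    if n = -1 then (G a).1 else if n = 0 then (G a).2.1
    else if n = 1 then (G a).2.2 else s n
  fun n => s' (n + F a)

end TMdefs

section MooreShift

variable {Q Λ : Type*}

theorem encode_apply_zero (q : Q) (t : ℤ → Λ) : encode q t 0 = Sum.inl q := by
  simp [encode]

theorem encode_apply_neg_one (q : Q) (t : ℤ → Λ) : encode q t (-1) = Sum.inr (t (-1)) := by
  simp [encode]

theorem encode_apply_one (q : Q) (t : ℤ → Λ) : encode q t 1 = Sum.inr (t 0) := by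
  simp [encode]

variable (F1 : Q → Λ → Q) (F2 : Q → Λ → Λ) (F3 : Q → Λ → ℤ)

theorem gshift_moore_encode (q : Q) (t : ℤ → Λ)
    (hd : F3 q (t 0) = 1 ∨ F3 q (t 0) = 0 ∨ F3 q (t 0) = -1) :
    gshift (mooreF F3) (mooreG F1 F2 F3) (encode q t)
      = encode (tmStep F1 F2 F3 (q, t)).1 (tmStep F1 F2 F3 (q, t)).2 := by
  funext n
  simp only [gshift, encode_apply_neg_one, encode_apply_zero, encode_apply_one, mooreF, mooreG,
    tmStep]
  rcases hd with hd | hd | hd <;> simp only [hd] <;> norm_num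
  all_goals simp only [encode, Function.update_apply]
  all_goals split_ifs <;> first | rfl | omega | (congr 2; omega)

theorem semiconj_encode_tmStep_gshift (h3 : ∀ q a, F3 q a = 1 ∨ F3 q a = 0 ∨ F3 q a = -1) :
    Function.Semiconj (fun c : Q × (ℤ → Λ) => encode c.1 c.2) (tmStep F1 F2 F3)
      (gshift (mooreF F3) (mooreG F1 F2 F3)) :=
  fun c => (gshift_moore_encode F1 F2 F3 c.1 c.2 (h3 _ _)).symm

theorem iterate_gshift_moore_encode_apply_zero
    (h3 : ∀ q a, F3 q a = 1 ∨ F3 q a = 0 ∨ F3 q a = -1) (c : Q × (ℤ → Λ)) (n : ℕ) :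
    (gshift (mooreF F3) (mooreG F1 F2 F3))^[n] (encode c.1 c.2) 0
      = Sum.inl ((tmStep F1 F2 F3)^[n] c).1 :=
  (congrFun ((semiconj_encode_tmStep_gshift F1 F2 F3 h3).iterate_right n c) 0).symm.trans
    (encode_apply_zero _ _)

end MooreShift

theorem stmt15_general {Q Λ : Type*} (F1 : Q → Λ → Q) (F2 : Q → Λ → Λ) (F3 : Q → Λ → ℤ)
    (q₀ q_halt : Q) (h3 : ∀ q a, F3 q a = 1 ∨ F3 q a = 0 ∨ F3 q a = -1) :
    (∀ (q : Q) (t : ℤ → Λ), q ≠ q_halt →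
      gshift (mooreF F3) (mooreG F1 F2 F3) (encode q t)
        = encode (tmStep F1 F2 F3 (q, t)).1 (tmStep F1 F2 F3 (q, t)).2) ∧
    ∀ (t : ℤ → Λ) (n : ℕ),
      ((tmStep F1 F2 F3)^[n] (q₀, t)).1 = q_halt →
      (∀ m < n, ((tmStep F1 F2 F3)^[m] (q₀, t)).1 ≠ q_halt) →
      ((gshift (mooreF F3) (mooreG F1 F2 F3))^[n] (encode q₀ t) 0
          = Sum.inl q_halt ∧
        ∀ m < n, ∃ q' : Q, q' ≠ q_halt ∧
          (gshift (mooreF F3) (mooreG F1 F2 F3))^[m] (encode q₀ t) 0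
            = Sum.inl q') := by
  refine ⟨fun q t _ => gshift_moore_encode F1 F2 F3 q t (h3 q (t 0)), fun t n hn hm => ?_⟩
  have orbit := iterate_gshift_moore_encode_apply_zero F1 F2 F3 h3 (q₀, t)
  exact ⟨hn ▸ orbit n, fun m hmn => ⟨_, hm m hmn, orbit m⟩⟩

/-- For the Moore generalized shift `φ` associated to a
Turing machine with transition function extended by
`δ(q_halt,t₀) = (q₀,t₀,0)`: for every sequence of the form `ψ(q,t)` with
`q ≠ q_halt` one has `φ(ψ(q,t)) = ψ(Δ(q,t))`; and if the machine with input
`(q₀,t)` reaches the halting state after exactly `n` steps, then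
`φⁿ(ψ(q₀,t))` has the symbol `q_halt` at position `0`, while `φ^m(ψ(q₀,t))`
has a non-halting state symbol at position `0` for all `m < n`. -/
theorem stmt15 {Q Λ : Type*} (F1 : Q → Λ → Q) (F2 : Q → Λ → Λ) (F3 : Q → Λ → ℤ)
    (q₀ q_halt : Q) (h3 : ∀ q a, F3 q a = 1 ∨ F3 q a = 0 ∨ F3 q a = -1)
    (hext : ∀ a, F1 q_halt a = q₀ ∧ F2 q_halt a = a ∧ F3 q_halt a = 0) :
    (∀ (q : Q) (t : ℤ → Λ), q ≠ q_halt →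
      gshift (mooreF F3) (mooreG F1 F2 F3) (encode q t)
        = encode (tmStep F1 F2 F3 (q, t)).1 (tmStep F1 F2 F3 (q, t)).2) ∧
    ∀ (t : ℤ → Λ) (n : ℕ),
      ((tmStep F1 F2 F3)^[n] (q₀, t)).1 = q_halt →
      (∀ m < n, ((tmStep F1 F2 F3)^[m] (q₀, t)).1 ≠ q_halt) →
      ((gshift (mooreF F3) (mooreG F1 F2 F3))^[n] (encode q₀ t) 0
          = Sum.inl q_halt ∧
        ∀ m < n, ∃ q' : Q, q' ≠ q_halt ∧
          (gshift (mooreF F3) (mooreG F1 F2 F3))^[m] (encode q₀ t) 0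
            = Sum.inl q') :=
  stmt15_general F1 F2 F3 q₀ q_halt h3
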